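/- Suppose v : (ℝ²\{0}) → ℝ (in variables (p,z)) is smooth and for each z ≠ 0 the function p ↦ p·H(p,z) extends continuously to p = 0 where H solves p∂_pH + H = 2πv on p ≠ 0. If moreover H itself extends continuously to the p = 0 axis (z ≠ 0) and the associated boundary functions ψ₁, ψ₂ have limits as z → 0⁺, then lim_{z→0⁺} ∫₋₁¹ 2π v(s,z) ds exists. Consequently, taking v(p,z) = 1/(p²+z²)^α for α > 1/2 yields functions v for which no such H exists. -/
import Mathlib


/-- `H` (with derivative `H'` in `p`) solves `p ∂ₚH + H = 2πv` away from
`p = 0`. -/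
def SolvesODE (v H H' : ℝ → ℝ → ℝ) : Prop :=
  (∀ z p : ℝ, p ≠ 0 → HasDerivAt (fun q => H q z) (H' p z) p) ∧
  (∀ z p : ℝ, p ≠ 0 → p * H' p z + H p z = 2 * Real.pi * v p z)

/-- `H` extends continuously to the `p = 0` axis (for `z ≠ 0`) and the boundary
functions `ψ₁(z) = H(1,z)`, `ψ₂(z) = −H(−1,z)` have limits as `z → 0⁺`. -/
def GoodBoundary (H : ℝ → ℝ → ℝ) : Prop :=
  (∀ z : ℝ, z ≠ 0 → ∃ L : ℝ,
    Filter.Tendsto (fun p => H p z) (nhdsWithin 0 {0}ᶜ) (nhds L)) ∧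
  (∃ L₁ : ℝ, Filter.Tendsto (fun z => H 1 z) (nhdsWithin 0 (Set.Ioi 0)) (nhds L₁)) ∧
  (∃ L₂ : ℝ, Filter.Tendsto (fun z => H (-1) z) (nhdsWithin 0 (Set.Ioi 0)) (nhds L₂))


section Aux
open Filter intervalIntegral MeasureTheory Set

lemma slice_eq (v H H' : ℝ → ℝ → ℝ) (hode : SolvesODE v H H')
    (hbdd : ∀ z : ℝ, z ≠ 0 → ∃ L : ℝ,
      Tendsto (fun p => H p z) (nhdsWithin 0 {0}ᶜ) (nhds L))
    (z : ℝ) (hz : z ≠ 0) (hv : Continuous fun s => v s z) :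
    ∫ s in (-1 : ℝ)..1, 2 * Real.pi * v s z = H (-1) z + H 1 z := by
  set f : ℝ → ℝ := fun s => 2 * Real.pi * v s z with hf
  have hfc : Continuous f := continuous_const.mul hv
  have hint : ∀ a b : ℝ, IntervalIntegrable f volume a b :=
    fun a b => hfc.intervalIntegrable a b
  obtain ⟨L, hL⟩ := hbdd z hz
  have hder : ∀ p : ℝ, p ≠ 0 → HasDerivAt (fun q => q * H q z) (f p) p := by
    intro p hp
    have h1 := (hasDerivAt_id p).mul (hode.1 z p hp)
    have h2 : 1 * H p z + id p * H' p z = f p := by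
      have := hode.2 z p hp
      simp only [hf, id]
      linarith
    rw [h2] at h1
    exact h1
  -- primitive continuity
  have hcont : Tendsto (fun b : ℝ => ∫ s in (0:ℝ)..b, f s) (nhds 0) (nhds 0) := by
    have := (intervalIntegral.continuous_primitive hint 0).tendsto 0
    rwa [intervalIntegral.integral_same] at this
  -- positive side
  have hposside : ∫ s in (0:ℝ)..1, f s = H 1 z := by
    have heq : ∀ᶠ a in nhdsWithin (0:ℝ) (Ioi 0),
        (∫ s in (0:ℝ)..1, f s) - ∫ s in (0:ℝ)..a, f s = 1 * H 1 z - a * H a z := by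
      filter_upwards [self_mem_nhdsWithin] with a (ha : a ∈ Ioi (0:ℝ))
      have hsub : ∫ s in a..(1:ℝ), f s
          = (∫ s in (0:ℝ)..1, f s) - ∫ s in (0:ℝ)..a, f s :=
        (intervalIntegral.integral_interval_sub_left (hint 0 1) (hint 0 a)).symm
      rw [← hsub]
      refine intervalIntegral.integral_eq_sub_of_hasDerivAt (fun x hx => hder x ?_) (hint a 1)
      have h0 : 0 < min a 1 := lt_min ha zero_lt_one
      exact ne_of_gt (lt_of_lt_of_le h0 hx.1)
    have hmul0 : Tendsto (fun a : ℝ => a * H a z) (nhdsWithin 0 (Ioi 0)) (nhds 0) := by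
      have h1 : Tendsto (fun a : ℝ => a) (nhdsWithin (0:ℝ) (Ioi 0)) (nhds 0) :=
        tendsto_id.mono_left nhdsWithin_le_nhds
      have h2 : Tendsto (fun a => H a z) (nhdsWithin (0:ℝ) (Ioi 0)) (nhds L) :=
        hL.mono_left (nhdsWithin_mono 0 (fun x hx => ne_of_gt hx))
      simpa using h1.mul h2
    have t1 : Tendsto (fun a : ℝ => (∫ s in (0:ℝ)..1, f s) - ∫ s in (0:ℝ)..a, f s)
        (nhdsWithin 0 (Ioi 0)) (nhds ((∫ s in (0:ℝ)..1, f s) - 0)) :=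
      tendsto_const_nhds.sub (hcont.mono_left nhdsWithin_le_nhds)
    have t2 : Tendsto (fun a : ℝ => 1 * H 1 z - a * H a z)
        (nhdsWithin 0 (Ioi 0)) (nhds (1 * H 1 z - 0)) :=
      tendsto_const_nhds.sub hmul0
    have := tendsto_nhds_unique (t1.congr' heq) t2
    linarith
  -- negative side
  have hnegside : ∫ s in (0:ℝ)..(-1:ℝ), f s = -H (-1) z := by
    have heq : ∀ᶠ a in nhdsWithin (0:ℝ) (Iio 0),
        (∫ s in (0:ℝ)..(-1:ℝ), f s) - ∫ s in (0:ℝ)..a, f s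
          = (-1) * H (-1) z - a * H a z := by
      filter_upwards [self_mem_nhdsWithin] with a (ha : a ∈ Iio (0:ℝ))
      have hsub : ∫ s in a..(-1:ℝ), f s
          = (∫ s in (0:ℝ)..(-1:ℝ), f s) - ∫ s in (0:ℝ)..a, f s :=
        (intervalIntegral.integral_interval_sub_left (hint 0 (-1)) (hint 0 a)).symm
      rw [← hsub]
      refine intervalIntegral.integral_eq_sub_of_hasDerivAt (fun x hx => hder x ?_) (hint a (-1))
      have h0 : max a (-1) < 0 := max_lt ha (by norm_num)
      exact ne_of_lt (lt_of_le_of_lt hx.2 h0)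
    have hmul0 : Tendsto (fun a : ℝ => a * H a z) (nhdsWithin 0 (Iio 0)) (nhds 0) := by
      have h1 : Tendsto (fun a : ℝ => a) (nhdsWithin (0:ℝ) (Iio 0)) (nhds 0) :=
        tendsto_id.mono_left nhdsWithin_le_nhds
      have h2 : Tendsto (fun a => H a z) (nhdsWithin (0:ℝ) (Iio 0)) (nhds L) :=
        hL.mono_left (nhdsWithin_mono 0 (fun x hx => ne_of_lt hx))
      simpa using h1.mul h2
    have t1 : Tendsto (fun a : ℝ => (∫ s in (0:ℝ)..(-1:ℝ), f s) - ∫ s in (0:ℝ)..a, f s)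
        (nhdsWithin 0 (Iio 0)) (nhds ((∫ s in (0:ℝ)..(-1:ℝ), f s) - 0)) :=
      tendsto_const_nhds.sub (hcont.mono_left nhdsWithin_le_nhds)
    have t2 : Tendsto (fun a : ℝ => (-1) * H (-1) z - a * H a z)
        (nhdsWithin 0 (Iio 0)) (nhds ((-1) * H (-1) z - 0)) :=
      tendsto_const_nhds.sub hmul0
    have := tendsto_nhds_unique (t1.congr' heq) t2
    linarith
  have hsplit : (∫ s in (-1:ℝ)..0, f s) + ∫ s in (0:ℝ)..1, f s = ∫ s in (-1:ℝ)..1, f s :=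
    intervalIntegral.integral_add_adjacent_intervals (hint (-1) 0) (hint 0 1)
  have hsymm : ∫ s in (-1:ℝ)..0, f s = H (-1) z := by
    have h := intervalIntegral.integral_symm (a := (0:ℝ)) (b := (-1:ℝ)) (f := f) (μ := volume)
    rw [hnegside] at h
    linarith [h]
  rw [← hsplit, hsymm, hposside]

lemma core (v H H' : ℝ → ℝ → ℝ)
    (hv : ∀ z : ℝ, z ≠ 0 → Continuous fun s => v s z)
    (hode : SolvesODE v H H') (hbd : GoodBoundary H) :
    ∃ L : ℝ, Tendsto (fun z => ∫ s in (-1 : ℝ)..1, 2 * Real.pi * v s z)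
      (nhdsWithin 0 (Set.Ioi 0)) (nhds L) := by
  obtain ⟨hax, ⟨L₁, h₁⟩, ⟨L₂, h₂⟩⟩ := hbd
  refine ⟨L₂ + L₁, (h₂.add h₁).congr' ?_⟩
  filter_upwards [self_mem_nhdsWithin] with z (hz : z ∈ Ioi (0:ℝ))
  exact (slice_eq v H H' hode hax z (ne_of_gt hz) (hv z (ne_of_gt hz))).symm

lemma diverge (α : ℝ) (hα : 1 / 2 < α) :
    Tendsto (fun z => ∫ s in (-1 : ℝ)..1, 2 * Real.pi * (1 / ((s ^ 2 + z ^ 2) ^ α)))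
      (nhdsWithin 0 (Set.Ioi 0)) atTop := by
  have hαpos : (0:ℝ) < α := by linarith
  -- lower bound function
  set G : ℝ → ℝ := fun z => (2 * z) * (2 * Real.pi / (2 * z ^ 2) ^ α) with hG
  have hGtop : Tendsto G (nhdsWithin 0 (Set.Ioi 0)) atTop := by
    have h1 : Tendsto (fun z : ℝ => (z⁻¹) ^ (2 * α - 1)) (nhdsWithin 0 (Set.Ioi 0)) atTop :=
      (tendsto_rpow_atTop (by linarith)).comp tendsto_inv_nhdsGT_zero
    have h2 : Tendsto (fun z : ℝ => (4 * Real.pi / 2 ^ α) * (z⁻¹) ^ (2 * α - 1))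
        (nhdsWithin 0 (Set.Ioi 0)) atTop := by
      apply Tendsto.const_mul_atTop _ h1
      positivity
    refine h2.congr' ?_
    filter_upwards [self_mem_nhdsWithin] with z (hz : z ∈ Ioi (0:ℝ))
    have hz0 : (0:ℝ) < z := hz
    have e1 : (2 * z ^ 2 : ℝ) ^ α = 2 ^ α * z ^ (2 * α) := by
      rw [Real.mul_rpow (by norm_num) (by positivity)]
      congr 1
      rw [← Real.rpow_natCast z 2, ← Real.rpow_mul hz0.le]
      norm_num [mul_comm]
    have e2 : (z⁻¹) ^ (2 * α - 1) = z ^ (1 - 2 * α) := by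
      rw [Real.inv_rpow hz0.le, ← Real.rpow_neg hz0.le]
      congr 1
      ring
    have e3 : z ^ (1 - 2*α) = z / z ^ (2*α) := by
      rw [Real.rpow_sub hz0, Real.rpow_one]
    show 4 * Real.pi / 2 ^ α * (z⁻¹) ^ (2 * α - 1)
        = 2 * z * (2 * Real.pi / (2 * z ^ 2) ^ α)
    rw [e1, e2, e3]
    have hz2 : (0:ℝ) < z ^ (2*α) := Real.rpow_pos_of_pos hz0 _
    have h2a : (0:ℝ) < (2:ℝ) ^ α := Real.rpow_pos_of_pos (by norm_num) _
    field_simp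
    ring
  have hlow : ∀ᶠ z in nhdsWithin (0:ℝ) (Set.Ioi 0),
      G z ≤ ∫ s in (-1 : ℝ)..1, 2 * Real.pi * (1 / ((s ^ 2 + z ^ 2) ^ α)) := by
    filter_upwards [Ioc_mem_nhdsGT_of_mem (by norm_num : (0:ℝ) ∈ Ico (0:ℝ) 1)]
      with z hz
    obtain ⟨hz0, hz1⟩ := hz
    set f : ℝ → ℝ := fun s => 2 * Real.pi * (1 / ((s ^ 2 + z ^ 2) ^ α)) with hf
    have hbpos : ∀ s : ℝ, 0 < s ^ 2 + z ^ 2 := fun s => by positivity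
    have hfc : Continuous f := by
      apply continuous_const.mul
      apply continuous_const.div
      · exact (((continuous_pow 2).add continuous_const).rpow_const
          (fun s => Or.inl (ne_of_gt (hbpos s))))
      · exact fun s => ne_of_gt (Real.rpow_pos_of_pos (hbpos s) α)
    have hint : ∀ a b : ℝ, IntervalIntegrable f volume a b :=
      fun a b => hfc.intervalIntegrable a b
    have hnn : ∀ s : ℝ, 0 ≤ f s := fun s => by
      have := (hbpos s).le
      positivity
    have hsplit1 : (∫ s in (-1:ℝ)..(-z), f s) + ∫ s in (-z)..(1:ℝ), f s
        = ∫ s in (-1:ℝ)..1, f s :=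
      intervalIntegral.integral_add_adjacent_intervals (hint _ _) (hint _ _)
    have hsplit2 : (∫ s in (-z)..z, f s) + ∫ s in z..(1:ℝ), f s
        = ∫ s in (-z)..(1:ℝ), f s :=
      intervalIntegral.integral_add_adjacent_intervals (hint _ _) (hint _ _)
    have hn1 : 0 ≤ ∫ s in (-1:ℝ)..(-z), f s :=
      intervalIntegral.integral_nonneg (by linarith) (fun u _ => hnn u)
    have hn2 : 0 ≤ ∫ s in z..(1:ℝ), f s :=
      intervalIntegral.integral_nonneg (by linarith) (fun u _ => hnn u)
    have hmid : G z ≤ ∫ s in (-z)..z, f s := by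
      have hc : ∀ s ∈ Icc (-z) z, (2 * Real.pi / (2 * z ^ 2) ^ α) ≤ f s := by
        intro s hs
        have hs2 : s ^ 2 ≤ z ^ 2 := sq_le_sq' hs.1 hs.2
        have hle : s ^ 2 + z ^ 2 ≤ 2 * z ^ 2 := by linarith
        have hrle : (s ^ 2 + z ^ 2) ^ α ≤ (2 * z ^ 2) ^ α :=
          Real.rpow_le_rpow (hbpos s).le hle hαpos.le
        have h1 : 1 / (2 * z ^ 2) ^ α ≤ 1 / (s ^ 2 + z ^ 2) ^ α :=
          one_div_le_one_div_of_le (Real.rpow_pos_of_pos (hbpos s) α) hrle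
        calc 2 * Real.pi / (2 * z ^ 2) ^ α
            = 2 * Real.pi * (1 / (2 * z ^ 2) ^ α) := by ring
          _ ≤ f s := by
              have : (0:ℝ) ≤ 2 * Real.pi := by positivity
              exact mul_le_mul_of_nonneg_left h1 this
      have := intervalIntegral.integral_mono_on (by linarith : -z ≤ z)
        (intervalIntegrable_const) (hint _ _) hc
      rw [intervalIntegral.integral_const, smul_eq_mul, sub_neg_eq_add] at this
      have hGz : G z = (z + z) * (2 * Real.pi / (2 * z ^ 2) ^ α) := by
        simp only [hG]; ring
      rw [hGz]
      exact this
    calc G z ≤ ∫ s in (-z)..z, f s := hmid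
      _ ≤ (∫ s in (-z)..z, f s) + ∫ s in z..(1:ℝ), f s := by linarith
      _ = ∫ s in (-z)..(1:ℝ), f s := hsplit2
      _ ≤ (∫ s in (-1:ℝ)..(-z), f s) + ∫ s in (-z)..(1:ℝ), f s := by linarith
      _ = ∫ s in (-1:ℝ)..1, f s := hsplit1
  exact tendsto_atTop_mono' _ hlow hGtop

end Aux

open Filter Set in
/-- (a) If `v` is continuous and `H` solves `p∂ₚH + H = 2πv`
on `p ≠ 0`, extends continuously across `p = 0` for `z ≠ 0`, and its boundary
functions have limits as `z → 0⁺`, then `lim_{z→0⁺} ∫_{-1}^{1} 2πv(s,z) ds`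
exists.  (b) Consequently, for `v(p,z) = 1/(p²+z²)^α` with `α > 1/2` no such
`H` exists. -/
theorem sl2_second_cohomology_obstruction :
    (∀ v H H' : ℝ → ℝ → ℝ,
      Continuous (fun pz : ℝ × ℝ => v pz.1 pz.2) →
      SolvesODE v H H' → GoodBoundary H →
      ∃ L : ℝ, Filter.Tendsto
        (fun z => ∫ s in (-1 : ℝ)..1, 2 * Real.pi * v s z)
        (nhdsWithin 0 (Set.Ioi 0)) (nhds L)) ∧
    (∀ α : ℝ, 1 / 2 < α →
      ¬ ∃ H H' : ℝ → ℝ → ℝ,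
        SolvesODE (fun p z => 1 / (p ^ 2 + z ^ 2) ^ α) H H' ∧ GoodBoundary H) := by
  constructor
  · intro v H H' hvc hode hbd
    exact core v H H'
      (fun z _ => hvc.comp (continuous_id.prodMk continuous_const)) hode hbd
  · rintro α hα ⟨H, H', hode, hbd⟩
    obtain ⟨L, hL⟩ := core (fun p z => 1 / (p ^ 2 + z ^ 2) ^ α) H H'
      (fun z hz => by
        have hbpos : ∀ s : ℝ, 0 < s ^ 2 + z ^ 2 := fun s => by positivity
        exact continuous_const.div
          (((continuous_pow 2).add continuous_const).rpow_const
            (fun s => Or.inl (ne_of_gt (hbpos s))))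
          (fun s => ne_of_gt (Real.rpow_pos_of_pos (hbpos s) α)))
      hode hbd
    exact not_tendsto_nhds_of_tendsto_atTop (diverge α hα) L hL
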